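/- arXiv:1901.02149 — 10 statements merged into one kernel-verified Lean document; each statement's English description precedes it below -/
import Mathlib

section
/- Existence and uniqueness of least common multiples: for all u, v ∈ S there exists a unique w ∈ S such that u·S ∩ v·S = w·S (where x·S = {x * s : s ∈ S}). -/
open scoped BigOperators

/-- `u` divides `w` in `S`: `w ∈ u·S`. -/
def SDvd {G : Type*} [Group G] (S : Submonoid G) (u w : G) : Prop := ∃ s ∈ S, w = u * s

/-- The left set `u·S = {u * s : s ∈ S}`. -/
def leftSet {G : Type*} [Group G] (S : Submonoid G) (u : G) : Set G := {w | ∃ s ∈ S, w = u * s}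

/-- `τ(u)`: the number of ordered factorizations `u = v * w` with `v, w ∈ S`. -/
noncomputable def tau {G : Type*} [Group G] (S : Submonoid G) (u : G) : ℕ :=
  Set.ncard {p : G × G | p.1 ∈ S ∧ p.2 ∈ S ∧ p.1 * p.2 = u}

/-- An integral monoid: a submonoid of a group satisfying Axioms I, II, III. -/
structure IntegralMonoid {G : Type*} [Group G] (S : Submonoid G) : Prop where
  ax1 : ∀ u ∈ S, u⁻¹ ∈ S → u = 1
  ax2 : ∀ u : G, ∃ x ∈ S, ∃ y ∈ S, u = x * y⁻¹ ∧
        ∀ z ∈ S, ∀ w ∈ S, u = z * w⁻¹ → ∃ c ∈ S, z = x * c ∧ w = y * c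
  ax3 : ∀ u ∈ S, {p : G × G | p.1 ∈ S ∧ p.2 ∈ S ∧ p.1 * p.2 = u}.Finite

/-!
Write `u⁻¹ * v = x * y⁻¹` as the fraction given by Axiom II. A common multiple `t` of `u` and `v`
yields another such fraction `(u⁻¹ * t) * (v⁻¹ * t)⁻¹`, so by the universality in Axiom II it is a
multiple of `u * x = v * y`; hence `u·S ∩ v·S = (u * x)·S`. The generator is unique because, by
Axiom I, two elements generating the same set `w·S` differ by a unit of `S`, i.e. by `1`.
-/

theorem mem_leftSet_iff {G : Type*} [Group G] {S : Submonoid G} {u w : G} :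
    w ∈ leftSet S u ↔ u⁻¹ * w ∈ S := by
  constructor
  · rintro ⟨s, hs, rfl⟩
    simpa using hs
  · intro h
    exact ⟨u⁻¹ * w, h, by group⟩

theorem mem_leftSet_self {G : Type*} [Group G] (S : Submonoid G) (u : G) : u ∈ leftSet S u :=
  mem_leftSet_iff.mpr (by simp)

namespace IntegralMonoid

variable {G : Type*} [Group G] {S : Submonoid G}

theorem leftSet_injective (hS : IntegralMonoid S) : Function.Injective (leftSet S) := by
  intro a b hab
  have hab_mem : a⁻¹ * b ∈ S := mem_leftSet_iff.mp (hab ▸ mem_leftSet_self S b)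
  have hba_mem : b⁻¹ * a ∈ S := mem_leftSet_iff.mp (hab ▸ mem_leftSet_self S a)
  have hunit : a⁻¹ * b = 1 := hS.ax1 _ hab_mem (by simpa using hba_mem)
  simpa [inv_mul_eq_one] using hunit

theorem exists_leftSet_inter_eq (hS : IntegralMonoid S) (u v : G) :
    ∃ x ∈ S, leftSet S u ∩ leftSet S v = leftSet S (u * x) := by
  obtain ⟨x, hx, y, hy, hxy, huniv⟩ := hS.ax2 (u⁻¹ * v)
  refine ⟨x, hx, Set.ext fun t => ?_⟩
  simp only [Set.mem_inter_iff, mem_leftSet_iff]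
  constructor
  · rintro ⟨hut, hvt⟩
    obtain ⟨c, hc, hxc, -⟩ := huniv _ hut _ hvt (by group)
    rwa [mul_inv_rev, mul_assoc, hxc, inv_mul_cancel_left]
  · intro h
    have hvt : v⁻¹ * t = y * ((u * x)⁻¹ * t) := by
      rw [show v = u * (x * y⁻¹) by rw [← hxy, mul_inv_cancel_left]]
      group
    refine ⟨?_, hvt ▸ S.mul_mem hy h⟩
    simpa [mul_assoc] using S.mul_mem hx h

end IntegralMonoid

theorem lcm_exists_unique_general {G : Type*} [Group G] (S : Submonoid G)
    (hS : IntegralMonoid S) (u : G) (hu : u ∈ S) (v : G) :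
    ∃! w : G, w ∈ S ∧ leftSet S u ∩ leftSet S v = leftSet S w := by
  obtain ⟨x, hx, hlcm⟩ := hS.exists_leftSet_inter_eq u v
  refine ⟨u * x, ⟨S.mul_mem hu hx, hlcm⟩, fun w ⟨_, hw⟩ => hS.leftSet_injective ?_⟩
  rw [← hw, hlcm]

theorem lcm_exists_unique {G : Type*} [Group G] (S : Submonoid G)
    (hS : IntegralMonoid S) (u : G) (hu : u ∈ S) (v : G) (hv : v ∈ S) :
    ∃! w : G, w ∈ S ∧ leftSet S u ∩ leftSet S v = leftSet S w :=
  lcm_exists_unique_general S hS u hu v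
end

section
/- Existence and uniqueness of greatest common divisors: for every k ≥ 1 and every family u : Fin k → S there exists a unique d ∈ S such that d divides u i for every i, and every e ∈ S that divides u i for all i also divides d. -/
open scoped BigOperators

/-!
Common multiples of `a, b ∈ S` are the `a z = b w` with `a⁻¹ b = z w⁻¹`, so the reduced fraction
`a⁻¹ b = x y⁻¹` of Axiom II yields the least common multiple `a x = b y`; by induction every finite
subset of `S` has a least common multiple. By Axiom III the common divisors of `u 0, …, u (k-1)`
form a finite set, and its least common multiple is the gcd. Axiom I makes divisibility
antisymmetric, which gives uniqueness.
-/

namespace SDvd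

variable {G : Type*} [Group G] {S : Submonoid G}

theorem one_left {u : G} (hu : u ∈ S) : SDvd S 1 u := ⟨u, hu, (one_mul u).symm⟩

theorem trans {u v w : G} : SDvd S u v → SDvd S v w → SDvd S u w := by
  rintro ⟨s, hs, rfl⟩ ⟨t, ht, rfl⟩
  exact ⟨s * t, S.mul_mem hs ht, mul_assoc u s t⟩

end SDvd

namespace IntegralMonoid

variable {G : Type*} [Group G] {S : Submonoid G}

theorem sDvd_antisymm (hS : IntegralMonoid S) {u v : G} :
    SDvd S u v → SDvd S v u → u = v := by
  rintro ⟨s, hs, rfl⟩ ⟨t, ht, hut⟩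
  have hst : s * t = 1 := mul_left_cancel (a := u) (by rw [← mul_assoc, ← hut, mul_one])
  have hs1 : s = 1 := hS.ax1 s hs (by rwa [inv_eq_of_mul_eq_one_right hst])
  rw [hs1, mul_one]

theorem finite_setOf_sDvd (hS : IntegralMonoid S) {u : G} (hu : u ∈ S) :
    {e | e ∈ S ∧ SDvd S e u}.Finite := by
  refine ((hS.ax3 u hu).image Prod.fst).subset ?_
  rintro e ⟨he, s, hs, rfl⟩
  exact ⟨(e, s), ⟨he, hs, rfl⟩, rfl⟩

theorem exists_lcm_pair (hS : IntegralMonoid S) {a b : G} (ha : a ∈ S) :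
    ∃ m ∈ S, SDvd S a m ∧ SDvd S b m ∧ ∀ n, SDvd S a n → SDvd S b n → SDvd S m n := by
  obtain ⟨x, hx, y, hy, hxy, hreduced⟩ := hS.ax2 (a⁻¹ * b)
  refine ⟨a * x, S.mul_mem ha hx, ⟨x, hx, rfl⟩, ⟨y, hy, ?_⟩, ?_⟩
  · rw [← mul_inv_eq_iff_eq_mul, mul_assoc, ← hxy, mul_inv_cancel_left]
  · rintro n ⟨z, hz, rfl⟩ ⟨w, hw, hzw⟩
    have hfrac : a⁻¹ * b = z * w⁻¹ := by
      rw [inv_mul_eq_iff_eq_mul, ← mul_assoc, eq_mul_inv_iff_mul_eq, hzw]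
    obtain ⟨c, hc, rfl, -⟩ := hreduced z hz w hw hfrac
    exact ⟨c, hc, (mul_assoc a x c).symm⟩

theorem exists_lcm_finset (hS : IntegralMonoid S) (T : Finset G) (hT : ∀ e ∈ T, e ∈ S) :
    ∃ m ∈ S, (∀ e ∈ T, SDvd S e m) ∧ ∀ n ∈ S, (∀ e ∈ T, SDvd S e n) → SDvd S m n := by
  classical
  induction T using Finset.induction_on with
  | empty => exact ⟨1, S.one_mem, by simp, fun _ hn _ => SDvd.one_left hn⟩
  | insert a T _ ih =>
    obtain ⟨m', hm', hdvd', hleast'⟩ := ih fun e he => hT e (Finset.mem_insert_of_mem he)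
    obtain ⟨m, hm, ham, hm'm, hleast⟩ :=
      hS.exists_lcm_pair (b := m') (hT a (Finset.mem_insert_self a T))
    refine ⟨m, hm, ?_, fun n hnS hn => ?_⟩
    · simp only [Finset.forall_mem_insert]
      exact ⟨ham, fun e he => (hdvd' e he).trans hm'm⟩
    · simp only [Finset.forall_mem_insert] at hn
      exact hleast n hn.1 (hleast' n hnS hn.2)

end IntegralMonoid

theorem gcd_exists_unique {G : Type*} [Group G] (S : Submonoid G)
    (hS : IntegralMonoid S) (k : ℕ) (hk : 1 ≤ k) (u : Fin k → G) (hu : ∀ i, u i ∈ S) :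
    ∃! d : G, d ∈ S ∧ (∀ i, SDvd S d (u i)) ∧
      ∀ e ∈ S, (∀ i, SDvd S e (u i)) → SDvd S e d := by
  let D : Set G := {e | e ∈ S ∧ ∀ i, SDvd S e (u i)}
  have hD : D.Finite :=
    (hS.finite_setOf_sDvd (hu ⟨0, hk⟩)).subset fun e he => ⟨he.1, he.2 _⟩
  obtain ⟨d, hd, hD_dvd, hd_least⟩ :=
    hS.exists_lcm_finset hD.toFinset fun e he => (hD.mem_toFinset.1 he).1
  have hd_dvd : ∀ i, SDvd S d (u i) :=
    fun i => hd_least (u i) (hu i) fun e he => (hD.mem_toFinset.1 he).2 i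
  have hd_greatest : ∀ e ∈ S, (∀ i, SDvd S e (u i)) → SDvd S e d :=
    fun e he heu => hD_dvd e (hD.mem_toFinset.2 ⟨he, heu⟩)
  refine ⟨d, ⟨hd, hd_dvd, hd_greatest⟩, fun d' ⟨hd', hd'_dvd, hd'_greatest⟩ => ?_⟩
  exact hS.sDvd_antisymm (hd_greatest d' hd' hd'_dvd) (hd'_greatest d hd hd_dvd)
end

section
/- Left multiplication and gcd: let c ∈ S, k ≥ 1 and u : Fin k → S. If d ∈ S is a greatest common divisor of the u i (i.e., d divides each u i and every common divisor of all the u i divides d) and e ∈ S is a greatest common divisor of the family i ↦ c * (u i), then e = c * d. -/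
open scoped BigOperators

/-! The greatest common divisor `e` of the `c * u i` is divisible by `c * d`, say `e = c * d * s`.
Cancelling `c`, the element `d * s` is a common divisor of the `u i`, hence divides `d`; since `d`
also divides `d * s`, Axiom I forces `s = 1`. -/

namespace SDvd

variable {G : Type*} [Group G] {S : Submonoid G}

theorem mul_left_iff {a b : G} (c : G) : SDvd S (c * a) (c * b) ↔ SDvd S a b := by
  simp only [SDvd, mul_assoc, mul_right_inj]

theorem antisymm (h1 : ∀ u ∈ S, u⁻¹ ∈ S → u = 1) {a b : G}
    (hab : SDvd S a b) (hba : SDvd S b a) : a = b := by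
  obtain ⟨s, hs, rfl⟩ := hab
  obtain ⟨t, ht, hst⟩ := hba
  have hst_one : s * t = 1 := mul_left_cancel (a := a) (by rw [← mul_assoc, ← hst, mul_one])
  have hs_one : s = 1 := h1 s hs (by rwa [inv_eq_of_mul_eq_one_right hst_one])
  rw [hs_one, mul_one]

end SDvd

theorem gcd_mul_left_integralMonoid_general {G : Type*} [Group G] (S : Submonoid G) (hS : IntegralMonoid S)
    (c : G) (hc : c ∈ S) (k : ℕ) (u : Fin k → G)
    (d : G) (hd : d ∈ S) (hd1 : ∀ i, SDvd S d (u i))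
    (hd2 : ∀ e ∈ S, (∀ i, SDvd S e (u i)) → SDvd S e d)
    (e : G) (he1 : ∀ i, SDvd S e (c * u i))
    (he2 : ∀ f ∈ S, (∀ i, SDvd S f (c * u i)) → SDvd S f e) :
    e = c * d := by
  obtain ⟨s, hs, rfl⟩ : SDvd S (c * d) e :=
    he2 _ (S.mul_mem hc hd) fun i => (SDvd.mul_left_iff c).2 (hd1 i)
  have hds : SDvd S (d * s) d :=
    hd2 _ (S.mul_mem hd hs) fun i => (SDvd.mul_left_iff c).1 (by rw [← mul_assoc]; exact he1 i)
  rw [mul_assoc, SDvd.antisymm hS.ax1 hds ⟨s, hs, rfl⟩]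

theorem gcd_mul_left_integralMonoid {G : Type*} [Group G] (S : Submonoid G) (hS : IntegralMonoid S)
    (c : G) (hc : c ∈ S) (k : ℕ) (hk : 1 ≤ k) (u : Fin k → G) (hu : ∀ i, u i ∈ S)
    (d : G) (hd : d ∈ S) (hd1 : ∀ i, SDvd S d (u i))
    (hd2 : ∀ e ∈ S, (∀ i, SDvd S e (u i)) → SDvd S e d)
    (e : G) (he : e ∈ S) (he1 : ∀ i, SDvd S e (c * u i))
    (he2 : ∀ f ∈ S, (∀ i, SDvd S f (c * u i)) → SDvd S f e) :
    e = c * d :=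
  gcd_mul_left_integralMonoid_general S hS c hc k u d hd hd1 hd2 e he1 he2
end

section
/- Existence of least common co-multiples up to w: let k ≥ 1, u : Fin k → S and w ∈ S with w ∈ S·(u i) for every i. Then there exists z ∈ S such that: (a) w ∈ S·z; (b) z ∈ S·(u i) for every i; and (c) whenever v ∈ S satisfies w ∈ S·v and v ∈ S·(u i) for every i, one has v ∈ S·z. -/
open scoped BigOperators

/-!
Among the common co-multiples of the `u i` that `w` is a co-multiple of, pick one, `z`, with
minimal `τ`. Axiom II provides a greatest common right divisor `c` of `z` and any other such `v`;
`c` is again one of these candidates, and `z = x * c`. Since `τ` strictly drops when a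
non-trivial left factor is removed (Axioms I and III), minimality forces `x = 1`, so `z = c`
right-divides `v`.
-/

namespace IntegralMonoid

variable {G : Type*} [Group G] {S : Submonoid G}

def CoDvd (S : Submonoid G) (a b : G) : Prop := ∃ s ∈ S, b = s * a

theorem CoDvd.refl (a : G) : CoDvd S a a := ⟨1, S.one_mem, (one_mul a).symm⟩

theorem CoDvd.trans {a b c : G} (hab : CoDvd S a b) (hbc : CoDvd S b c) : CoDvd S a c := by
  obtain ⟨s, hs, rfl⟩ := hab
  obtain ⟨t, ht, rfl⟩ := hbc
  exact ⟨t * s, S.mul_mem ht hs, (mul_assoc t s a).symm⟩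

def factorizations (S : Submonoid G) (u : G) : Set (G × G) :=
  {p | p.1 ∈ S ∧ p.2 ∈ S ∧ p.1 * p.2 = u}

/-- `(v, w) ↦ (x * v, w)` embeds the factorizations of `c` into those of `x * c`, and misses
`(1, x * c)` because `x⁻¹ ∉ S`. -/
theorem tau_lt_tau_mul (hS : IntegralMonoid S) {x c : G} (hx : x ∈ S) (hc : c ∈ S)
    (hx1 : x ≠ 1) : tau S c < tau S (x * c) := by
  set shift : G × G → G × G := fun p => (x * p.1, p.2)
  have shift_injective : Function.Injective shift := fun p q h =>
    Prod.ext (mul_left_cancel (congrArg Prod.fst h)) (congrArg Prod.snd h :)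
  have shift_subset : shift '' factorizations S c ⊆ factorizations S (x * c) := by
    rintro _ ⟨⟨a, b⟩, ⟨ha, hb, rfl⟩, rfl⟩
    exact ⟨S.mul_mem hx ha, hb, mul_assoc x a b⟩
  have trivial_not_mem : ((1 : G), x * c) ∉ shift '' factorizations S c := by
    rintro ⟨⟨a, b⟩, ⟨ha, -, -⟩, hab⟩
    have hxa : x * a = 1 := congrArg Prod.fst hab
    exact hx1 (hS.ax1 x hx (inv_eq_of_mul_eq_one_right hxa ▸ ha))
  calc tau S c = (shift '' factorizations S c).ncard :=
        (Set.ncard_image_of_injective _ shift_injective).symm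
    _ < tau S (x * c) :=
      Set.ncard_lt_ncard
        ((Set.ssubset_iff_of_subset shift_subset).2
          ⟨_, ⟨S.one_mem, S.mul_mem hx hc, one_mul _⟩, trivial_not_mem⟩)
        (hS.ax3 _ (S.mul_mem hx hc))

/-- Take `c` from the reduced fraction `z₁ * z₂⁻¹ = x * y⁻¹` of Axiom II: a common right
divisor `t`, with `z₁ = a * t` and `z₂ = b * t`, gives `z₁ * z₂⁻¹ = a * b⁻¹`, which factors
through the reduced one. -/
theorem exists_gcrd (hS : IntegralMonoid S) {z₁ z₂ : G} (h₁ : z₁ ∈ S) (h₂ : z₂ ∈ S) :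
    ∃ c ∈ S, CoDvd S c z₁ ∧ CoDvd S c z₂ ∧
      ∀ t, CoDvd S t z₁ → CoDvd S t z₂ → CoDvd S t c := by
  obtain ⟨x, hx, y, hy, -, hreduced⟩ := hS.ax2 (z₁ * z₂⁻¹)
  obtain ⟨c, hc, hz₁, hz₂⟩ := hreduced z₁ h₁ z₂ h₂ rfl
  refine ⟨c, hc, ⟨x, hx, hz₁⟩, ⟨y, hy, hz₂⟩, ?_⟩
  rintro t ⟨a, ha, hat⟩ ⟨b, hb, hbt⟩
  obtain ⟨d, hd, rfl, -⟩ := hreduced a ha b hb (by rw [hat, hbt]; group)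
  exact ⟨d, hd, mul_left_cancel (by rw [← hz₁, hat, mul_assoc])⟩

end IntegralMonoid

open IntegralMonoid

theorem lcm_codvd_exists_general {G : Type*} [Group G] (S : Submonoid G) (hS : IntegralMonoid S)
    (k : ℕ) (u : Fin k → G)
    (w : G) (hw : w ∈ S) (hwu : ∀ i, ∃ s ∈ S, w = s * u i) :
    ∃ z ∈ S, (∃ s ∈ S, w = s * z) ∧ (∀ i, ∃ s ∈ S, z = s * u i) ∧
      ∀ v ∈ S, (∃ s ∈ S, w = s * v) → (∀ i, ∃ s ∈ S, v = s * u i) →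
        ∃ s ∈ S, v = s * z := by
  set IsCandidate : G → Prop := fun z => z ∈ S ∧ CoDvd S z w ∧ ∀ i, CoDvd S (u i) z
  obtain ⟨z, hz, hmin⟩ :=
    (measure (tau S)).wf.has_min {z | IsCandidate z} ⟨w, hw, CoDvd.refl w, hwu⟩
  refine ⟨z, hz.1, hz.2.1, hz.2.2, fun v hv _ hvu => ?_⟩
  obtain ⟨c, hc, ⟨x, hx, hzc⟩, hcv, hgcrd⟩ := hS.exists_gcrd hz.1 hv
  have hc_candidate : IsCandidate c :=
    ⟨hc, CoDvd.trans ⟨x, hx, hzc⟩ hz.2.1, fun i => hgcrd _ (hz.2.2 i) (hvu i)⟩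
  obtain rfl : x = 1 := by
    by_contra hx1
    exact hmin c hc_candidate (hzc ▸ hS.tau_lt_tau_mul hx hc hx1)
  rw [one_mul] at hzc
  exact hzc ▸ hcv

theorem lcm_codvd_exists {G : Type*} [Group G] (S : Submonoid G) (hS : IntegralMonoid S)
    (k : ℕ) (hk : 1 ≤ k) (u : Fin k → G) (hu : ∀ i, u i ∈ S)
    (w : G) (hw : w ∈ S) (hwu : ∀ i, ∃ s ∈ S, w = s * u i) :
    ∃ z ∈ S, (∃ s ∈ S, w = s * z) ∧ (∀ i, ∃ s ∈ S, z = s * u i) ∧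
      ∀ v ∈ S, (∃ s ∈ S, w = s * v) → (∀ i, ∃ s ∈ S, v = s * u i) →
        ∃ s ∈ S, v = s * z :=
  lcm_codvd_exists_general S hS k u w hw hwu
end

section
/- Duality between common co-divisors/co-multiples and common divisors/multiples: let w, x, y, a, b, d, z, u, v ∈ S satisfy w = a * x = b * y; a·S ∩ b·S = w·S; d divides both a and b and every common divisor of a and b in S divides d; w = d * z; and z = u * y = v * x. Then the only common divisor of u and v in S is 1, and u·S ∩ v·S = z·S. -/
open scoped BigOperators

/-!
Cancelling `x` and `y` gives `a = d * v` and `b = d * u`, so left multiplication by `d` carries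
common divisors of `u, v` to common divisors of `a, b` and `u·S ∩ v·S` onto `a·S ∩ b·S = w·S = d·(z·S)`.
A common divisor `e` of `u, v` thus yields `d * e ∣ d`, making `e` invertible in `S`, hence `e = 1`.
-/

open scoped Pointwise

section

variable {G : Type*} [Group G] {S : Submonoid G}

theorem SDvd.mul_left {e u : G} (h : SDvd S e u) (d : G) : SDvd S (d * e) (d * u) := by
  obtain ⟨s, hs, rfl⟩ := h
  exact ⟨s, hs, (mul_assoc d e s).symm⟩

theorem IntegralMonoid.eq_one_of_mul_sDvd_self (hS : IntegralMonoid S) {d e : G} (he : e ∈ S)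
    (h : SDvd S (d * e) d) : e = 1 := by
  obtain ⟨c, hc, hdc⟩ := h
  have hec : e * c = 1 := mul_left_cancel (a := d) (by rw [← mul_assoc, ← hdc, mul_one])
  exact hS.ax1 e he (inv_eq_of_mul_eq_one_right hec ▸ hc)

theorem leftSet_mul (d u : G) : leftSet S (d * u) = d • leftSet S u := by
  ext t
  simp only [leftSet, Set.mem_smul_set, Set.mem_ofPred_eq, smul_eq_mul]
  constructor
  · rintro ⟨s, hs, rfl⟩
    exact ⟨u * s, ⟨s, hs, rfl⟩, (mul_assoc d u s).symm⟩
  · rintro ⟨_, ⟨s, hs, rfl⟩, rfl⟩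
    exact ⟨s, hs, (mul_assoc d u s).symm⟩

end

theorem duality_gcd_codvd_general {G : Type*} [Group G] (S : Submonoid G) (hS : IntegralMonoid S)
    (w x y a b d z u v : G)
    (hd : d ∈ S)
    (h1 : w = a * x) (h2 : w = b * y)
    (h3 : leftSet S a ∩ leftSet S b = leftSet S w)
    (h4c : ∀ e ∈ S, SDvd S e a → SDvd S e b → SDvd S e d)
    (h5 : w = d * z)
    (h6 : z = u * y) (h7 : z = v * x) :
    (∀ e ∈ S, SDvd S e u → SDvd S e v → e = 1) ∧
      leftSet S u ∩ leftSet S v = leftSet S z := by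
  have hav : a = d * v := mul_right_cancel (b := x) (by rw [← h1, h5, h7, mul_assoc])
  have hbu : b = d * u := mul_right_cancel (b := y) (by rw [← h2, h5, h6, mul_assoc])
  refine ⟨fun e he heu hev => ?_, ?_⟩
  · refine hS.eq_one_of_mul_sDvd_self he (h4c _ (S.mul_mem hd he) ?_ ?_)
    · exact hav ▸ hev.mul_left d
    · exact hbu ▸ heu.mul_left d
  · rw [hav, hbu, h5, leftSet_mul, leftSet_mul, leftSet_mul, ← Set.smul_set_inter,
      Set.inter_comm] at h3
    exact smul_left_cancel d h3

theorem duality_gcd_codvd {G : Type*} [Group G] (S : Submonoid G) (hS : IntegralMonoid S)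
    (w x y a b d z u v : G)
    (hw : w ∈ S) (hx : x ∈ S) (hy : y ∈ S) (ha : a ∈ S) (hb : b ∈ S)
    (hd : d ∈ S) (hz : z ∈ S) (hu : u ∈ S) (hv : v ∈ S)
    (h1 : w = a * x) (h2 : w = b * y)
    (h3 : leftSet S a ∩ leftSet S b = leftSet S w)
    (h4a : SDvd S d a) (h4b : SDvd S d b)
    (h4c : ∀ e ∈ S, SDvd S e a → SDvd S e b → SDvd S e d)
    (h5 : w = d * z)
    (h6 : z = u * y) (h7 : z = v * x) :
    (∀ e ∈ S, SDvd S e u → SDvd S e v → e = 1) ∧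
      leftSet S u ∩ leftSet S v = leftSet S z :=
  duality_gcd_codvd_general S hS w x y a b d z u v hd h1 h2 h3 h4c h5 h6 h7
end

section
/- Strengthened uniqueness in homogeneous monoids: if w, u, v ∈ S and d ∈ S are such that d is a greatest common divisor of w and u (d divides both and every common divisor of w and u divides d), d is also a greatest common divisor of w and v, and w·S ∩ u·S = w·S ∩ v·S, then u = v. -/
/-- Axiom IV′ (homogeneity), in the equivalent form proved in the paper. -/
def Homogeneous {G : Type*} [Group G] (S : Submonoid G) : Prop :=
  ∀ w u v : G, w ∈ S → u ∈ S → v ∈ S →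
    (∀ d ∈ S, SDvd S d w → SDvd S d u → d = 1) →
    (∀ d ∈ S, SDvd S d w → SDvd S d v → d = 1) →
    leftSet S w ∩ leftSet S u = leftSet S w ∩ leftSet S v → u = v

namespace SDvd

variable {G : Type*} [Group G] {S : Submonoid G}

theorem mul_left_s9 {a b : G} (h : SDvd S a b) (d : G) : SDvd S (d * a) (d * b) := by
  obtain ⟨s, hs, rfl⟩ := h
  exact ⟨s, hs, (mul_assoc d a s).symm⟩

theorem of_mul_left {d a b : G} (h : SDvd S (d * a) (d * b)) : SDvd S a b := by
  obtain ⟨s, hs, hb⟩ := h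
  exact ⟨s, hs, mul_left_cancel (hb.trans (mul_assoc d a s))⟩

end SDvd

theorem preimage_mul_left_leftSet {G : Type*} [Group G] (S : Submonoid G) (d a : G) :
    (d * ·) ⁻¹' leftSet S (d * a) = leftSet S a := by
  ext x
  exact ⟨fun h => SDvd.of_mul_left h, fun h => SDvd.mul_left_s9 h d⟩

theorem IntegralMonoid.eq_one_of_sdvd_one {G : Type*} [Group G] {S : Submonoid G}
    (hS : IntegralMonoid S) {e : G} (he : e ∈ S) (h : SDvd S e 1) : e = 1 := by
  obtain ⟨c, hc, h1⟩ := h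
  exact hS.ax1 e he (by rwa [inv_eq_of_mul_eq_one_right h1.symm])

theorem IntegralMonoid.coprime_of_gcd_mul_left {G : Type*} [Group G] {S : Submonoid G}
    (hS : IntegralMonoid S) {d a b : G} (hd : d ∈ S)
    (hgcd : ∀ e ∈ S, SDvd S e (d * a) → SDvd S e (d * b) → SDvd S e d) :
    ∀ e ∈ S, SDvd S e a → SDvd S e b → e = 1 := by
  intro e he hea heb
  have hde : SDvd S (d * e) (d * 1) := by
    rw [mul_one]
    exact hgcd (d * e) (S.mul_mem hd he) (hea.mul_left_s9 d) (heb.mul_left_s9 d)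
  exact hS.eq_one_of_sdvd_one he hde.of_mul_left

theorem lcm_gcd_unique_general {G : Type*} [Group G] (S : Submonoid G)
    (hS : IntegralMonoid S) (hhom : Homogeneous S)
    (w u v d : G) (hd : d ∈ S)
    (hd1 : SDvd S d w) (hd2 : SDvd S d u)
    (hd3 : ∀ e ∈ S, SDvd S e w → SDvd S e u → SDvd S e d)
    (hd4 : SDvd S d v)
    (hd5 : ∀ e ∈ S, SDvd S e w → SDvd S e v → SDvd S e d)
    (hlcm : leftSet S w ∩ leftSet S u = leftSet S w ∩ leftSet S v) :
    u = v := by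
  obtain ⟨w', hw', rfl⟩ := hd1
  obtain ⟨u', hu', rfl⟩ := hd2
  obtain ⟨v', hv', rfl⟩ := hd4
  have hlcm' : leftSet S w' ∩ leftSet S u' = leftSet S w' ∩ leftSet S v' := by
    simpa only [Set.preimage_inter, preimage_mul_left_leftSet] using
      congrArg ((d * ·) ⁻¹' ·) hlcm
  rw [hhom w' u' v' hw' hu' hv' (hS.coprime_of_gcd_mul_left hd hd3)
    (hS.coprime_of_gcd_mul_left hd hd5) hlcm']

theorem lcm_gcd_unique {G : Type*} [Group G] (S : Submonoid G)
    (hS : IntegralMonoid S) (hhom : Homogeneous S)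
    (w u v d : G) (hw : w ∈ S) (hu : u ∈ S) (hv : v ∈ S) (hd : d ∈ S)
    (hd1 : SDvd S d w) (hd2 : SDvd S d u)
    (hd3 : ∀ e ∈ S, SDvd S e w → SDvd S e u → SDvd S e d)
    (hd4 : SDvd S d v)
    (hd5 : ∀ e ∈ S, SDvd S e w → SDvd S e v → SDvd S e d)
    (hlcm : leftSet S w ∩ leftSet S u = leftSet S w ∩ leftSet S v) :
    u = v :=
  lcm_gcd_unique_general S hS hhom w u v d hd hd1 hd2 hd3 hd4 hd5 hlcm
end

section
/- Fundamental lemma for arithmetic: let u, v, w ∈ S with u * v ∈ w·S and suppose the only common divisor of w and u in S is 1. Then there exists v₁ ∈ S such that v ∈ v₁·S and u·S ∩ w·S = (u * v₁)·S. Moreover, if w′ ∈ S also satisfies u * v ∈ w′·S, the only common divisor of w′ and u in S is 1, and u·S ∩ w′·S = (u * v₁)·S, then w′ = w. -/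
open scoped BigOperators

theorem fundamental_lemma_arithmetic {G : Type*} [Group G] (S : Submonoid G)
    (hS : IntegralMonoid S) (hhom : Homogeneous S)
    (u v w : G) (hu : u ∈ S) (hv : v ∈ S) (hw : w ∈ S)
    (hdvd : SDvd S w (u * v))
    (hcop : ∀ e ∈ S, SDvd S e w → SDvd S e u → e = 1) :
    ∃ v₁ ∈ S, SDvd S v₁ v ∧
      leftSet S u ∩ leftSet S w = leftSet S (u * v₁) ∧
      ∀ w' ∈ S, SDvd S w' (u * v) →
        (∀ e ∈ S, SDvd S e w' → SDvd S e u → e = 1) →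
        leftSet S u ∩ leftSet S w' = leftSet S (u * v₁) → w' = w := by
  obtain ⟨x, hx, y, hy, hxy, hmin⟩ := hS.ax2 (w⁻¹ * u)
  have key : u * y = w * x := by
    have : u = w * (x * y⁻¹) := by rw [← hxy]; group
    rw [this]; group
  have hint : leftSet S u ∩ leftSet S w = leftSet S (u * y) := by
    ext t
    constructor
    · rintro ⟨⟨a, ha, rfl⟩, ⟨b, hb, htb⟩⟩
      have hba : w⁻¹ * u = b * a⁻¹ := by
        have h1 : b = w⁻¹ * (u * a) := by rw [htb]; group
        rw [h1]; group
      obtain ⟨c, hc, hbc, hac⟩ := hmin b hb a ha hba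
      exact ⟨c, hc, by rw [hac, mul_assoc]⟩
    · rintro ⟨s, hs, rfl⟩
      exact ⟨⟨y * s, S.mul_mem hy hs, by group⟩,
             ⟨x * s, S.mul_mem hx hs, by rw [← mul_assoc, ← key, mul_assoc]⟩⟩
  refine ⟨y, hy, ?_, hint, ?_⟩
  · obtain ⟨s, hs, hvs⟩ := hdvd
    have hsv : w⁻¹ * u = s * v⁻¹ := by
      have h1 : s = w⁻¹ * (u * v) := by rw [hvs]; group
      rw [h1]; group
    obtain ⟨c, hc, hsc, hvc⟩ := hmin s hs v hv hsv
    exact ⟨c, hc, hvc⟩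
  · intro w' hw' _ hcop' hint'
    exact hhom u w' w hu hw' hw
      (fun d hd h1 h2 => hcop' d hd h2 h1)
      (fun d hd h1 h2 => hcop d hd h2 h1)
      (hint'.trans hint.symm)
end

section
/- Composition of free castlings: suppose u₁, u₂, v, ṽ, ũ₂, w̃, ũ₁ ∈ S satisfy: the only common divisor of u₂ and ṽ in S is 1, u₂·S ∩ ṽ·S = (u₂ * v)·S, and u₂ * v = ṽ * ũ₂; also the only common divisor of u₁ and w̃ in S is 1, u₁·S ∩ w̃·S = (u₁ * ṽ)·S, and u₁ * ṽ = w̃ * ũ₁. Then the only common divisor of u₁ * u₂ and w̃ in S is 1, (u₁ * u₂)·S ∩ w̃·S = (u₁ * u₂ * v)·S, and u₁ * u₂ * v = w̃ * ũ₁ * ũ₂. -/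
open scoped BigOperators

theorem composition_free_castlings {G : Type*} [Group G] (S : Submonoid G)
    (hS : IntegralMonoid S) (hhom : Homogeneous S)
    (u₁ u₂ v vt ut₂ wt ut₁ : G)
    (hu₁ : u₁ ∈ S) (hu₂ : u₂ ∈ S) (hv : v ∈ S) (hvt : vt ∈ S)
    (hut₂ : ut₂ ∈ S) (hwt : wt ∈ S) (hut₁ : ut₁ ∈ S)
    (h1 : ∀ e ∈ S, SDvd S e u₂ → SDvd S e vt → e = 1)
    (h2 : leftSet S u₂ ∩ leftSet S vt = leftSet S (u₂ * v))
    (h3 : u₂ * v = vt * ut₂)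
    (h4 : ∀ e ∈ S, SDvd S e u₁ → SDvd S e wt → e = 1)
    (h5 : leftSet S u₁ ∩ leftSet S wt = leftSet S (u₁ * vt))
    (h6 : u₁ * vt = wt * ut₁) :
    (∀ e ∈ S, SDvd S e (u₁ * u₂) → SDvd S e wt → e = 1) ∧
      leftSet S (u₁ * u₂) ∩ leftSet S wt = leftSet S (u₁ * u₂ * v) ∧
      u₁ * u₂ * v = wt * (ut₁ * ut₂) := by
  have hc : u₁ * u₂ * v = wt * (ut₁ * ut₂) := by
    rw [mul_assoc, h3, ← mul_assoc, h6, mul_assoc]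
  refine ⟨?_, ?_, hc⟩
  · intro e he hd1 hd2
    obtain ⟨a, ha, hae⟩ := hd1
    obtain ⟨b, hb, hbe⟩ := hd2
    obtain ⟨x, hx, y, hy, hxy, huniv⟩ := hS.ax2 (u₁⁻¹ * e)
    have he' : e = u₁ * u₂ * a⁻¹ := eq_mul_inv_of_mul_eq hae.symm
    have hq1 : u₁⁻¹ * e = u₂ * a⁻¹ := by rw [he']; group
    obtain ⟨c, hc1, hzc, -⟩ := huniv u₂ hu₂ a ha hq1
    have hvte : u₁ * vt = e * (b * ut₁) := by rw [h6, hbe, mul_assoc]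
    have hq2 : u₁⁻¹ * e = vt * (b * ut₁)⁻¹ := by
      have : e = u₁ * vt * (b * ut₁)⁻¹ := eq_mul_inv_of_mul_eq hvte.symm
      rw [this]; group
    obtain ⟨c', hc', hzc', -⟩ := huniv vt hvt (b * ut₁) (S.mul_mem hb hut₁) hq2
    have hx1 : x = 1 := h1 x hx ⟨c, hc1, hzc⟩ ⟨c', hc', hzc'⟩
    rw [hx1, one_mul] at hxy
    have hu1e : u₁ = e * y := by
      rw [inv_mul_eq_iff_eq_mul] at hxy
      rw [hxy]; group
    exact h4 e he ⟨y, hy, hu1e⟩ ⟨b, hb, hbe⟩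
  · ext x
    constructor
    · rintro ⟨⟨s, hs, hxs⟩, ⟨t, ht, hxt⟩⟩
      have hx1 : x ∈ leftSet S u₁ ∩ leftSet S wt :=
        ⟨⟨u₂ * s, S.mul_mem hu₂ hs, by rw [hxs, mul_assoc]⟩, ⟨t, ht, hxt⟩⟩
      rw [h5] at hx1
      obtain ⟨r, hr, hxr⟩ := hx1
      have hcan : u₂ * s = vt * r := by
        apply mul_left_cancel (a := u₁)
        rw [← mul_assoc, ← mul_assoc, ← hxs, ← hxr]
      have hx2 : u₂ * s ∈ leftSet S u₂ ∩ leftSet S vt :=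
        ⟨⟨s, hs, rfl⟩, ⟨r, hr, hcan⟩⟩
      rw [h2] at hx2
      obtain ⟨q, hq, hq2⟩ := hx2
      exact ⟨q, hq, by rw [hxs, mul_assoc, hq2, ← mul_assoc, ← mul_assoc]⟩
    · rintro ⟨q, hq, hxq⟩
      exact ⟨⟨v * q, S.mul_mem hv hq, by rw [hxq, mul_assoc]⟩,
        ⟨ut₁ * ut₂ * q, S.mul_mem (S.mul_mem hut₁ hut₂) hq,
          by rw [hxq, hc, mul_assoc]⟩⟩
end

section
/- Sub-multiplicativity of the divisor function: for all u, v ∈ S one has τ(u * v) ≤ τ(u) · τ(v). Moreover equality holds if and only if u and v are castled-free, i.e., there exists x ∈ S such that the only common divisor of u and x in S is 1 and u·S ∩ x·S = (u * v)·S. -/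
open scoped BigOperators

/-!
Work inside the monoid `S`, where `∣` is the paper's left divisibility. A divisor `z` of `u * v`
determines the pair `(gcd(u, z), x)` with `lcm(u, z) = u * x`, a divisor of `u` and a divisor of
`v`. Homogeneity recovers `z` from its pair, because after cancelling the gcd the cofactors of `u`
and `z` are coprime with a prescribed lcm; this injection gives the inequality, and equality holds
iff it is onto.

The pair `(1, v)` is attained exactly by the witnesses of castled-freeness. Conversely, given a
witness `z₀` and `x ∣ v`, the gcd `s` of `z₀` and `u * x` has `lcm(u, s) = u * x` (homogeneity,
applied after dividing `s` out, rules out a proper divisor of `u * x`), and for `a ∣ u` dividing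
`a` out of `u` and of `lcm(a, s)` leaves coprime cofactors, which yields a divisor of `u * v` with
pair `(a, x)`.
-/

section Monoid

variable {M : Type*} [Monoid M] {a b c d g m s : M}

/-- In a noncommutative monoid `a ∣ c` means `c = a * d`, so this is the least common *right*
multiple: `a·M ∩ b·M = m·M`. -/
def IsLcm (a b m : M) : Prop := ∀ c, m ∣ c ↔ a ∣ c ∧ b ∣ c

def IsGcd (a b g : M) : Prop := ∀ d, d ∣ g ↔ d ∣ a ∧ d ∣ b

/-- Axiom IV′, stated with lcms. -/
def IsHomogeneous (M : Type*) [Monoid M] : Prop :=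
  ∀ ⦃w a b m : M⦄, IsRelPrime w a → IsRelPrime w b → IsLcm w a m → IsLcm w b m → a = b

namespace IsLcm

theorem left_dvd (h : IsLcm a b m) : a ∣ m := ((h m).1 dvd_rfl).1

theorem right_dvd (h : IsLcm a b m) : b ∣ m := ((h m).1 dvd_rfl).2

theorem dvd (h : IsLcm a b m) (ha : a ∣ c) (hb : b ∣ c) : m ∣ c := (h c).2 ⟨ha, hb⟩

theorem symm (h : IsLcm a b m) : IsLcm b a m := fun c ↦ (h c).trans and_comm

theorem of_dvd_of_dvd {b' : M} (h : IsLcm a b m) (hb : b ∣ b') (hb' : b' ∣ m) :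
    IsLcm a b' m :=
  fun _ ↦ ⟨fun hc ↦ ⟨h.left_dvd.trans hc, hb'.trans hc⟩, fun ⟨hac, hbc⟩ ↦ h.dvd hac (hb.trans hbc)⟩

end IsLcm

namespace IsGcd

theorem dvd_left (h : IsGcd a b g) : g ∣ a := ((h g).1 dvd_rfl).1

theorem dvd_right (h : IsGcd a b g) : g ∣ b := ((h g).1 dvd_rfl).2

theorem dvd (h : IsGcd a b g) (ha : d ∣ a) (hb : d ∣ b) : d ∣ g := (h d).2 ⟨ha, hb⟩

end IsGcd

theorem exists_isGcd (hlcm : ∀ a b : M, ∃ m, IsLcm a b m) (hfin : ∀ a : M, {d | d ∣ a}.Finite)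
    (a b : M) : ∃ g, IsGcd a b g := by
  obtain ⟨g, ⟨hga, hgb⟩, hmax⟩ := Set.Finite.exists_maximalFor (fun d ↦ {e | e ∣ d})
    {d | d ∣ a ∧ d ∣ b} ((hfin a).subset fun _ ↦ And.left) ⟨1, one_dvd a, one_dvd b⟩
  refine ⟨g, fun d ↦ ⟨fun hd ↦ ⟨hd.trans hga, hd.trans hgb⟩, fun ⟨hda, hdb⟩ ↦ ?_⟩⟩
  obtain ⟨m, hm⟩ := hlcm g d
  -- the lcm of two common divisors is a common divisor, so maximality of `g` absorbs it
  have hmg : m ∣ g := hmax ⟨hm.dvd hga hda, hm.dvd hgb hdb⟩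
    (fun _ he ↦ he.trans hm.left_dvd) dvd_rfl
  exact hm.right_dvd.trans hmg

theorem IsHomogeneous.eq_of_dvd_of_dvd (hhom : IsHomogeneous M) (ha : IsRelPrime s a)
    (hb : IsRelPrime s b) (h : IsLcm s a m) (hab : a ∣ b) (hbm : b ∣ m) : a = b :=
  hhom ha hb h (h.of_dvd_of_dvd hab hbm)

end Monoid

section LeftCancelMonoid

variable {M : Type*} [Monoid M] [IsLeftCancelMul M] {a b c d g m p s t w x : M}

theorem mul_dvd_mul_left_iff : a * b ∣ a * c ↔ b ∣ c :=
  ⟨fun ⟨d, h⟩ ↦ ⟨d, mul_left_cancel (h.trans (mul_assoc a b d))⟩, mul_dvd_mul_left a⟩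

theorem eq_one_of_dvd_one [Subsingleton Mˣ] (h : a ∣ 1) : a = 1 := by
  obtain ⟨b, hb⟩ := h
  exact (IsUnit.of_mul_eq_one b hb.symm).eq_one

theorem dvd_antisymm_of_subsingleton_units [Subsingleton Mˣ] (hab : a ∣ b) (hba : b ∣ a) :
    a = b := by
  obtain ⟨c, rfl⟩ := hab
  obtain ⟨d, hd⟩ := hba
  have hcd : c * d = 1 := mul_eq_left.1 (by rw [← mul_assoc, ← hd])
  rw [(IsUnit.of_mul_eq_one d hcd).eq_one, mul_one]

theorem IsLcm.unique [Subsingleton Mˣ] {m' : M} (h : IsLcm a b m) (h' : IsLcm a b m') :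
    m = m' :=
  dvd_antisymm_of_subsingleton_units (h.dvd h'.left_dvd h'.right_dvd)
    (h'.dvd h.left_dvd h.right_dvd)

theorem IsGcd.unique [Subsingleton Mˣ] {g' : M} (h : IsGcd a b g) (h' : IsGcd a b g') :
    g = g' :=
  dvd_antisymm_of_subsingleton_units (h'.dvd h.dvd_left h.dvd_right)
    (h.dvd h'.dvd_left h'.dvd_right)

theorem isLcm_mul_left_iff : IsLcm (c * a) (c * b) (c * m) ↔ IsLcm a b m := by
  refine ⟨fun h e ↦ ?_, fun h e ↦ ⟨fun he ↦ ?_, fun ⟨hae, hbe⟩ ↦ ?_⟩⟩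
  · simpa only [mul_dvd_mul_left_iff] using h (c * e)
  · obtain ⟨f, rfl⟩ := he
    exact ⟨(mul_dvd_mul_left c h.left_dvd).mul_right f,
      (mul_dvd_mul_left c h.right_dvd).mul_right f⟩
  · obtain ⟨f, rfl⟩ := (dvd_mul_right c a).trans hae
    rw [mul_dvd_mul_left_iff] at hae hbe ⊢
    exact h.dvd hae hbe

theorem IsGcd.isRelPrime_of_mul [Subsingleton Mˣ] (h : IsGcd (c * a) (c * b) c) :
    IsRelPrime a b := fun d hda hdb ↦ by
  have hcd : c * d ∣ c * 1 := by
    rw [mul_one]; exact h.dvd (mul_dvd_mul_left c hda) (mul_dvd_mul_left c hdb)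
  exact isUnit_iff_eq_one.2 (eq_one_of_dvd_one (mul_dvd_mul_left_iff.1 hcd))

theorem IsRelPrime.isGcd_mul [Subsingleton Mˣ] (hlcm : ∀ a b : M, ∃ m, IsLcm a b m)
    (h : IsRelPrime a b) : IsGcd (c * a) (c * b) c := by
  refine fun d ↦ ⟨fun hd ↦ ⟨hd.mul_right a, hd.mul_right b⟩, fun ⟨hda, hdb⟩ ↦ ?_⟩
  obtain ⟨m, hm⟩ := hlcm c d
  obtain ⟨e, rfl⟩ := hm.left_dvd
  have he : e = 1 := (h (mul_dvd_mul_left_iff.1 (hm.dvd (dvd_mul_right c a) hda))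
    (mul_dvd_mul_left_iff.1 (hm.dvd (dvd_mul_right c b) hdb))).eq_one
  simpa [he] using hm.right_dvd


theorem IsLcm.cofactor (h : IsLcm (a * w) s (a * w * t)) (ha : IsLcm a s (a * p)) :
    IsLcm w p (w * t) := fun c ↦ by
  rw [← mul_dvd_mul_left_iff (a := a), ← mul_assoc, h, ← mul_dvd_mul_left_iff (a := a) (b := w),
    ← mul_dvd_mul_left_iff (a := a) (b := p), ha]
  exact ⟨fun ⟨hw, hs⟩ ↦ ⟨hw, dvd_mul_right a c, hs⟩, fun ⟨hw, _, hs⟩ ↦ ⟨hw, hs⟩⟩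

theorem IsHomogeneous.isRelPrime_cofactor (hhom : IsHomogeneous M) (h : IsRelPrime (a * w) s)
    (ha : IsLcm a s (a * p)) : IsRelPrime w p := fun d hdw hdp ↦ by
  have hsa : IsRelPrime s a := fun e hes hea ↦ h (hea.trans (dvd_mul_right a w)) hes
  have hsad : IsRelPrime s (a * d) := fun e hes he ↦ h (he.trans (mul_dvd_mul_left a hdw)) hes
  -- `a` and `a * d` have the same lcm `a * p` with `s`
  have had : a = a * d :=
    hhom.eq_of_dvd_of_dvd hsa hsad ha.symm (dvd_mul_right a d) (mul_dvd_mul_left a hdp)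
  exact mul_eq_left.1 had.symm ▸ isUnit_one

theorem IsHomogeneous.isLcm_of_isGcd [Subsingleton Mˣ] (hhom : IsHomogeneous M)
    (hlcm : ∀ a b : M, ∃ m, IsLcm a b m) (hws : IsRelPrime w s) (h : IsLcm w s (w * t))
    (hx : x ∣ t) (hg : IsGcd s (w * x) g) : IsLcm w g (w * x) := by
  -- write `lcm(w, g) = w * x'` with `x = x' * π`; homogeneity will force `π = 1`
  obtain ⟨m, hm⟩ := hlcm w g
  obtain ⟨x', rfl⟩ := hm.left_dvd
  obtain ⟨π, rfl⟩ := mul_dvd_mul_left_iff.1 (hm.dvd (dvd_mul_right w x) hg.dvd_right)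
  suffices hπ : π = 1 by rwa [hπ, mul_one]
  obtain ⟨s₁, rfl⟩ := hg.dvd_left
  obtain ⟨p, hp⟩ := hm.right_dvd
  obtain ⟨r, hr⟩ := h.right_dvd
  have hgw : IsLcm g w (g * p) := hp ▸ hm.symm
  have hlcm₁ : IsLcm s₁ p (s₁ * r) := IsLcm.cofactor (hr ▸ h.symm) hgw
  have hcop₁ : IsRelPrime s₁ p := hhom.isRelPrime_cofactor (fun _ h₁ h₂ ↦ hws h₂ h₁) hgw
  have hwx : w * (x' * π) = g * (p * π) := by rw [← mul_assoc, hp, mul_assoc]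
  have hcop₂ : IsRelPrime s₁ (p * π) := IsGcd.isRelPrime_of_mul (c := g) (hwx ▸ hg)
  have hpπ : p * π ∣ s₁ * r := by
    rw [← mul_dvd_mul_left_iff (a := g), ← hwx, ← mul_assoc g, ← hr]
    exact mul_dvd_mul_left w hx
  -- both `p` and `p * π` are coprime to `s₁` with lcm `s₁ * r`
  exact mul_eq_left.1 (hhom.eq_of_dvd_of_dvd hcop₁ hcop₂ hlcm₁ (dvd_mul_right p π) hpπ).symm

end LeftCancelMonoid

theorem Set.InjOn.ncard_eq_iff_surjOn {α β : Type*} {s : Set α} {t : Set β} {f : α → β}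
    (hinj : Set.InjOn f s) (hf : Set.MapsTo f s t) (ht : t.Finite) :
    s.ncard = t.ncard ↔ Set.SurjOn f s t := by
  refine ⟨fun h b hb ↦ ?_, fun h ↦ Set.BijOn.ncard_eq ⟨hf, hinj, h⟩⟩
  obtain ⟨a, ha, rfl⟩ := Set.surj_on_of_inj_on_of_ncard_le (fun a _ ↦ f a) (fun _ ha ↦ hf ha)
    (fun _ _ ha hb ↦ hinj ha hb) h.ge ht b hb
  exact ⟨a, ha, rfl⟩

section Counting

variable {M : Type*} [Monoid M] [IsLeftCancelMul M] [Subsingleton Mˣ] {a m u v x z z₀ z' : M}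

theorem IsHomogeneous.eq_of_isGcd_of_isLcm (hhom : IsHomogeneous M) (hg : IsGcd u z a)
    (hg' : IsGcd u z' a) (hl : IsLcm u z m) (hl' : IsLcm u z' m) : z = z' := by
  obtain ⟨u₁, rfl⟩ := hg.dvd_left
  obtain ⟨z₁, rfl⟩ := hg.dvd_right
  obtain ⟨z₁', rfl⟩ := hg'.dvd_right
  obtain ⟨m₁, rfl⟩ := (dvd_mul_right a u₁).trans hl.left_dvd
  rw [hhom hg.isRelPrime_of_mul hg'.isRelPrime_of_mul (isLcm_mul_left_iff.1 hl)
    (isLcm_mul_left_iff.1 hl')]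

theorem IsHomogeneous.exists_isGcd_isLcm (hhom : IsHomogeneous M)
    (hlcm : ∀ a b : M, ∃ m, IsLcm a b m) (hfin : ∀ a : M, {d | d ∣ a}.Finite)
    (h₀ : IsRelPrime u z₀) (h : IsLcm u z₀ (u * v)) (ha : a ∣ u) (hx : x ∣ v) :
    ∃ z, IsGcd u z a ∧ IsLcm u z (u * x) := by
  obtain ⟨s, hs⟩ := exists_isGcd hlcm hfin z₀ (u * x)
  have hus : IsLcm u s (u * x) := hhom.isLcm_of_isGcd hlcm h₀ h hx hs
  have hcop : IsRelPrime u s := fun d hdu hds ↦ h₀ hdu (hds.trans hs.dvd_left)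
  obtain ⟨u₁, rfl⟩ := ha
  obtain ⟨m, hm⟩ := hlcm a s
  obtain ⟨p, rfl⟩ := hm.left_dvd
  refine ⟨a * p, (hhom.isRelPrime_cofactor hcop hm).isGcd_mul hlcm, ?_⟩
  rw [mul_assoc, isLcm_mul_left_iff]
  exact hus.cofactor hm

theorem IsHomogeneous.ncard_dvd_mul_le_and_eq_iff (hhom : IsHomogeneous M)
    (hlcm : ∀ a b : M, ∃ m, IsLcm a b m) (hfin : ∀ a : M, {d | d ∣ a}.Finite) (u v : M) :
    {d | d ∣ u * v}.ncard ≤ {d | d ∣ u}.ncard * {d | d ∣ v}.ncard ∧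
      ({d | d ∣ u * v}.ncard = {d | d ∣ u}.ncard * {d | d ∣ v}.ncard ↔
        ∃ z, IsRelPrime u z ∧ IsLcm u z (u * v)) := by
  have hpair (z : M) : ∃ q : M × M, IsGcd u z q.1 ∧ IsLcm u z (u * q.2) := by
    obtain ⟨a, ha⟩ := exists_isGcd hlcm hfin u z
    obtain ⟨m, hm⟩ := hlcm u z
    obtain ⟨x, rfl⟩ := hm.left_dvd
    exact ⟨(a, x), ha, hm⟩
  choose Φ hΦ using hpair
  have hmaps : Set.MapsTo Φ {d | d ∣ u * v} ({d | d ∣ u} ×ˢ {d | d ∣ v}) := fun z hz ↦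
    ⟨(hΦ z).1.dvd_left, mul_dvd_mul_left_iff.1 ((hΦ z).2.dvd (dvd_mul_right u v) hz)⟩
  have hinj : Set.InjOn Φ {d | d ∣ u * v} := fun z _ z' _ h ↦
    hhom.eq_of_isGcd_of_isLcm (hΦ z).1 (h ▸ (hΦ z').1) (hΦ z).2 (h ▸ (hΦ z').2)
  have hfin₂ := (hfin u).prod (hfin v)
  rw [← Set.ncard_prod, hinj.ncard_eq_iff_surjOn hmaps hfin₂]
  refine ⟨Set.ncard_le_ncard_of_injOn Φ hmaps hinj hfin₂, fun hsurj ↦ ?_, ?_⟩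
  · obtain ⟨z, -, hz⟩ := hsurj (show ((1 : M), v) ∈ _ from ⟨one_dvd u, dvd_rfl⟩)
    obtain ⟨hgcd, hlcm_uz⟩ := hΦ z
    rw [hz] at hgcd hlcm_uz
    exact ⟨z, IsGcd.isRelPrime_of_mul (c := 1) (by rwa [one_mul, one_mul]), hlcm_uz⟩
  · rintro ⟨z₀, h₀, h⟩ ⟨a, x⟩ ⟨ha, hx⟩
    obtain ⟨z, hza, hzx⟩ := hhom.exists_isGcd_isLcm hlcm hfin h₀ h ha hx
    refine ⟨z, hzx.right_dvd.trans (mul_dvd_mul_left u hx), Prod.ext ?_ ?_⟩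
    · exact (hΦ z).1.unique hza
    · exact mul_left_cancel ((hΦ z).2.unique hzx)

end Counting

section Submonoid

variable {G : Type*} [Group G] {S : Submonoid G}

theorem sdvd_coe_iff {a b : S} : SDvd S a b ↔ a ∣ b :=
  ⟨fun ⟨s, hs, h⟩ ↦ ⟨⟨s, hs⟩, Subtype.ext h⟩, fun ⟨c, h⟩ ↦ ⟨c, c.2, congrArg Subtype.val h⟩⟩

theorem leftSet_coe (a : S) : leftSet S a = Subtype.val '' {c : S | a ∣ c} := by
  ext w
  refine ⟨fun ⟨s, hs, h⟩ ↦ ⟨a * ⟨s, hs⟩, dvd_mul_right _ _, h.symm⟩, ?_⟩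
  rintro ⟨c, ⟨d, rfl⟩, rfl⟩
  exact ⟨d, d.2, rfl⟩

theorem leftSet_inter_eq_iff {a b m : S} :
    leftSet S a ∩ leftSet S b = leftSet S m ↔ IsLcm a b m := by
  rw [leftSet_coe, leftSet_coe, leftSet_coe, ← Set.image_inter Subtype.val_injective,
    Subtype.val_injective.image_injective.eq_iff, IsLcm, Set.ext_iff]
  exact forall_congr' fun c ↦ Iff.comm

theorem isRelPrime_coe_iff [Subsingleton Sˣ] {a b : S} :
    IsRelPrime a b ↔ ∀ e ∈ S, SDvd S e a → SDvd S e b → e = 1 := by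
  refine ⟨fun h e he hea heb ↦ ?_, fun h d hda hdb ↦ ?_⟩
  · exact congrArg Subtype.val (h (d := ⟨e, he⟩) (sdvd_coe_iff.1 hea) (sdvd_coe_iff.1 heb)).eq_one
  · exact isUnit_iff_eq_one.2 (Subtype.ext (h d d.2 (sdvd_coe_iff.2 hda) (sdvd_coe_iff.2 hdb)))

theorem tau_coe_eq_ncard (a : S) : tau S a = {d : S | d ∣ a}.ncard := by
  refine Set.ncard_congr (fun q hq ↦ (⟨q.1, hq.1⟩ : S))
    (fun q hq ↦ ⟨⟨q.2, hq.2.1⟩, Subtype.ext hq.2.2.symm⟩) ?_ ?_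
  · intro ⟨x, y⟩ ⟨x', y'⟩ ⟨_, _, h⟩ ⟨_, _, h'⟩ hxx'
    obtain rfl : x = x' := congrArg Subtype.val hxx'
    exact Prod.ext rfl (mul_left_cancel (h.trans h'.symm))
  · rintro d ⟨c, hc⟩
    exact ⟨(d, c), ⟨d.2, c.2, congrArg Subtype.val hc.symm⟩, rfl⟩

namespace IntegralMonoid

theorem subsingleton_units (hS : IntegralMonoid S) : Subsingleton Sˣ :=
  Subsingleton.units_of_isUnit fun a ha ↦ by
    obtain ⟨b, hab⟩ := isUnit_iff_exists_inv.1 ha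
    have hinv : (a : G)⁻¹ = b := inv_eq_of_mul_eq_one_right (congrArg Subtype.val hab)
    exact Subtype.ext (hS.ax1 a a.2 (hinv ▸ b.2))

theorem exists_isLcm (hS : IntegralMonoid S) (a b : S) : ∃ m, IsLcm a b m := by
  -- the lcm is `a * x = b * y` for the reduced fraction `a⁻¹ * b = x * y⁻¹` of Axiom II
  obtain ⟨x, hx, y, hy, hxy, hmin⟩ := hS.ax2 ((a : G)⁻¹ * b)
  have hab : a * (⟨x, hx⟩ : S) = b * ⟨y, hy⟩ := Subtype.ext <| by
    simp only [Submonoid.coe_mul]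
    rw [← inv_mul_cancel_right x y, ← hxy, ← mul_assoc, mul_inv_cancel_left]
  refine ⟨a * ⟨x, hx⟩, fun c ↦ ⟨?_, ?_⟩⟩
  · rintro ⟨f, rfl⟩
    exact ⟨(dvd_mul_right a _).mul_right f, hab ▸ (dvd_mul_right b _).mul_right f⟩
  · rintro ⟨⟨s, rfl⟩, ⟨r, hr⟩⟩
    obtain ⟨e, he, hs, -⟩ := hmin s s.2 r r.2 <| by
      rw [inv_mul_eq_iff_eq_mul, ← mul_assoc, eq_mul_inv_iff_mul_eq]
      exact congrArg Subtype.val hr.symm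
    exact ⟨⟨e, he⟩, Subtype.ext (by simp [hs, mul_assoc])⟩

theorem finite_dvd (hS : IntegralMonoid S) (a : S) : {d : S | d ∣ a}.Finite := by
  refine Set.Finite.of_finite_image (((hS.ax3 a a.2).image Prod.fst).subset ?_)
    Subtype.val_injective.injOn
  rintro _ ⟨d, ⟨c, hc⟩, rfl⟩
  exact ⟨(d, c), ⟨d.2, c.2, congrArg Subtype.val hc.symm⟩, rfl⟩

end IntegralMonoid

theorem Homogeneous.isHomogeneous [Subsingleton Sˣ] (hhom : Homogeneous S) :
    IsHomogeneous S := fun w a b m ha hb hma hmb ↦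
  Subtype.ext <| hhom w a b w.2 a.2 b.2 (isRelPrime_coe_iff.1 ha) (isRelPrime_coe_iff.1 hb)
    (by rw [leftSet_inter_eq_iff.2 hma, leftSet_inter_eq_iff.2 hmb])

end Submonoid

theorem tau_submultiplicative {G : Type*} [Group G] (S : Submonoid G)
    (hS : IntegralMonoid S) (hhom : Homogeneous S)
    (u v : G) (hu : u ∈ S) (hv : v ∈ S) :
    tau S (u * v) ≤ tau S u * tau S v ∧
      (tau S (u * v) = tau S u * tau S v ↔
        ∃ x ∈ S, (∀ e ∈ S, SDvd S e u → SDvd S e x → e = 1) ∧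
          leftSet S u ∩ leftSet S x = leftSet S (u * v)) := by
  have := hS.subsingleton_units
  lift u to S using hu
  lift v to S using hv
  rw [← Submonoid.coe_mul, tau_coe_eq_ncard, tau_coe_eq_ncard, tau_coe_eq_ncard]
  obtain ⟨hle, heq⟩ :=
    hhom.isHomogeneous.ncard_dvd_mul_le_and_eq_iff hS.exists_isLcm hS.finite_dvd u v
  refine ⟨hle, heq.trans ⟨?_, ?_⟩⟩
  · rintro ⟨z, hz, hl⟩
    exact ⟨z, z.2, isRelPrime_coe_iff.1 hz, leftSet_inter_eq_iff.2 hl⟩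
  · rintro ⟨x, hx, hcop, hl⟩
    exact ⟨⟨x, hx⟩, isRelPrime_coe_iff.2 hcop, leftSet_inter_eq_iff.1 hl⟩
end

section
/- Irreducibles dividing a least common multiple: let k ≥ 2, u : Fin k → S, and m ∈ S with ⋂ᵢ (u i)·S = m·S. If p ∈ S is irreducible and m ∈ p·S, then there exists an index j with u j ∈ p·S. -/
open scoped BigOperators

section Aux

variable {G : Type*} [Group G] {S : Submonoid G}

lemma mem_leftSet {u g : G} : g ∈ leftSet S u ↔ SDvd S u g := Iff.rfl

lemma sdvd_refl (S : Submonoid G) (u : G) : SDvd S u u := ⟨1, S.one_mem, (mul_one u).symm⟩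

lemma sdvd_trans {a b c : G} (h1 : SDvd S a b) (h2 : SDvd S b c) : SDvd S a c := by
  obtain ⟨s, hs, rfl⟩ := h1
  obtain ⟨t, ht, rfl⟩ := h2
  exact ⟨s * t, S.mul_mem hs ht, mul_assoc _ _ _⟩

lemma sdvd_mem {a b : G} (ha : a ∈ S) (h : SDvd S a b) : b ∈ S := by
  obtain ⟨s, hs, rfl⟩ := h; exact S.mul_mem ha hs

lemma imul_eq_one (hS : IntegralMonoid S) {s t : G} (hs : s ∈ S) (ht : t ∈ S)
    (h : s * t = 1) : s = 1 ∧ t = 1 := by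
  have h1 : t = s⁻¹ := eq_inv_of_mul_eq_one_right h
  have hs1 : s = 1 := hS.ax1 s hs (h1 ▸ ht)
  refine ⟨hs1, ?_⟩
  rw [hs1, one_mul] at h
  exact h

lemma sdvd_antisymm (hS : IntegralMonoid S) {a b : G} (h1 : SDvd S a b) (h2 : SDvd S b a) :
    a = b := by
  obtain ⟨s, hs, rfl⟩ := h1
  obtain ⟨t, ht, h⟩ := h2
  have h' : a = a * (s * t) := by rw [← mul_assoc]; exact h
  have hst : s * t = 1 := left_eq_mul.mp h'
  have hs1 := (imul_eq_one hS hs ht hst).1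
  rw [hs1, mul_one]

lemma lcm_exists (hS : IntegralMonoid S) {a b : G} (ha : a ∈ S) (hb : b ∈ S) :
    ∃ l ∈ S, leftSet S a ∩ leftSet S b = leftSet S l := by
  obtain ⟨x, hx, y, hy, hxy, huniv⟩ := hS.ax2 (a⁻¹ * b)
  refine ⟨a * x, S.mul_mem ha hx, ?_⟩
  have key : a * x = b * y := by
    have hb' : b = a * (x * y⁻¹) := by rw [← hxy]; group
    rw [hb']; group
  ext g
  constructor
  · rintro ⟨⟨s, hs, rfl⟩, ⟨t, ht, hgt⟩⟩
    have hfrac : a⁻¹ * b = s * t⁻¹ := by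
      have hseq : s = a⁻¹ * (b * t) := by rw [← hgt]; group
      rw [hseq]; group
    obtain ⟨c, hc, hsxc, htyc⟩ := huniv s hs t ht hfrac
    exact ⟨c, hc, by rw [hsxc, mul_assoc]⟩
  · rintro ⟨c, hc, rfl⟩
    exact ⟨⟨x * c, S.mul_mem hx hc, mul_assoc _ _ _⟩,
           ⟨y * c, S.mul_mem hy hc, by rw [key, mul_assoc]⟩⟩

lemma lcm_dvd_left {a b l : G} (h : leftSet S a ∩ leftSet S b = leftSet S l) : SDvd S a l := by
  have hl : l ∈ leftSet S l := sdvd_refl S l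
  rw [← h] at hl
  exact hl.1

lemma lcm_dvd_right {a b l : G} (h : leftSet S a ∩ leftSet S b = leftSet S l) : SDvd S b l := by
  have hl : l ∈ leftSet S l := sdvd_refl S l
  rw [← h] at hl
  exact hl.2

lemma dvd_of_lcm {a b l t : G} (h : leftSet S a ∩ leftSet S b = leftSet S l)
    (h1 : SDvd S a t) (h2 : SDvd S b t) : SDvd S l t := by
  have : t ∈ leftSet S a ∩ leftSet S b := ⟨h1, h2⟩
  rw [h] at this
  exact this

lemma eq_of_leftSet_eq (hS : IntegralMonoid S) {a b : G}
    (h : leftSet S a = leftSet S b) : a = b := by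
  have h1 : SDvd S a b := by
    have := sdvd_refl S b; rw [show (SDvd S b b) = (b ∈ leftSet S b) from rfl, ← h] at this
    exact this
  have h2 : SDvd S b a := by
    have := sdvd_refl S a; rw [show (SDvd S a a) = (a ∈ leftSet S a) from rfl, h] at this
    exact this
  exact sdvd_antisymm hS h1 h2

lemma tau_pos (hS : IntegralMonoid S) {a : G} (ha : a ∈ S) : 0 < tau S a := by
  have hfin := hS.ax3 a ha
  exact (Set.ncard_pos hfin).mpr ⟨(1, a), S.one_mem, ha, one_mul a⟩

lemma tau_lt (hS : IntegralMonoid S) {a b : G} (ha : a ∈ S) (hab : SDvd S a b) (hne : a ≠ b) :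
    tau S a < tau S b := by
  obtain ⟨s, hs, rfl⟩ := hab
  have hsne : s ≠ 1 := by rintro rfl; exact hne (mul_one a).symm
  have hBfin : {q : G × G | q.1 ∈ S ∧ q.2 ∈ S ∧ q.1 * q.2 = a * s}.Finite :=
    hS.ax3 _ (S.mul_mem ha hs)
  have hinj : Function.Injective (fun q : G × G => (q.1, q.2 * s)) := by
    rintro ⟨x1, x2⟩ ⟨y1, y2⟩ h
    simp only [Prod.mk.injEq] at h ⊢
    exact ⟨h.1, mul_right_cancel h.2⟩
  have himg : (fun q : G × G => (q.1, q.2 * s)) '' {q : G × G | q.1 ∈ S ∧ q.2 ∈ S ∧ q.1 * q.2 = a}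
      ⊆ {q : G × G | q.1 ∈ S ∧ q.2 ∈ S ∧ q.1 * q.2 = a * s} := by
    rintro q ⟨⟨x1, x2⟩, ⟨hx1, hx2, hx12⟩, rfl⟩
    exact ⟨hx1, S.mul_mem hx2 hs, by rw [← mul_assoc, hx12]⟩
  have hnot : (a * s, 1) ∉
      (fun q : G × G => (q.1, q.2 * s)) '' {q : G × G | q.1 ∈ S ∧ q.2 ∈ S ∧ q.1 * q.2 = a} := by
    rintro ⟨⟨x1, x2⟩, ⟨hx1, hx2, hx12⟩, heq⟩
    simp only [Prod.mk.injEq] at heq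
    exact hsne (imul_eq_one hS hx2 hs heq.2).2
  have hmemB : (a * s, 1) ∈ {q : G × G | q.1 ∈ S ∧ q.2 ∈ S ∧ q.1 * q.2 = a * s} :=
    ⟨S.mul_mem ha hs, S.one_mem, mul_one _⟩
  have hss := (Set.ssubset_iff_of_subset himg).mpr ⟨(a * s, 1), hmemB, hnot⟩
  calc tau S a
      = ((fun q : G × G => (q.1, q.2 * s)) ''
          {q : G × G | q.1 ∈ S ∧ q.2 ∈ S ∧ q.1 * q.2 = a}).ncard :=
        (Set.ncard_image_of_injective _ hinj).symm
    _ < _ := Set.ncard_lt_ncard hss hBfin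

lemma tau_one (hS : IntegralMonoid S) : tau S (1 : G) = 1 := by
  have hset : {q : G × G | q.1 ∈ S ∧ q.2 ∈ S ∧ q.1 * q.2 = 1} = {((1 : G), (1 : G))} := by
    ext ⟨v, w⟩
    simp only [Set.mem_setOf_eq, Set.mem_singleton_iff, Prod.mk.injEq]
    constructor
    · rintro ⟨hv, hw, hvw⟩; exact imul_eq_one hS hv hw hvw
    · rintro ⟨rfl, rfl⟩; exact ⟨S.one_mem, S.one_mem, one_mul 1⟩
  rw [tau, hset, Set.ncard_singleton]

lemma irred_ne_one (hS : IntegralMonoid S) {p : G} (h2 : tau S p = 2) : p ≠ 1 := by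
  rintro rfl
  rw [tau_one hS] at h2
  exact absurd h2 (by norm_num)

lemma irred_divisors (hS : IntegralMonoid S) {p : G} (hp : p ∈ S) (h2 : tau S p = 2)
    {d : G} (hd : d ∈ S) (hdp : SDvd S d p) : d = 1 ∨ d = p := by
  obtain ⟨t, ht, hpt⟩ := hdp
  have hp1 : p ≠ 1 := irred_ne_one hS h2
  have hAfin : {q : G × G | q.1 ∈ S ∧ q.2 ∈ S ∧ q.1 * q.2 = p}.Finite := hS.ax3 p hp
  have hsub : ({(1, p), (p, 1)} : Set (G × G)) ⊆
      {q : G × G | q.1 ∈ S ∧ q.2 ∈ S ∧ q.1 * q.2 = p} := by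
    rintro q hq
    rcases hq with rfl | rfl
    · exact ⟨S.one_mem, hp, one_mul p⟩
    · exact ⟨hp, S.one_mem, mul_one p⟩
  have hne : ((1 : G), p) ≠ (p, (1 : G)) := by
    intro h; exact hp1 (Prod.ext_iff.mp h).2
  have hcard : ({(1, p), (p, 1)} : Set (G × G)).ncard = 2 := Set.ncard_pair hne
  have heq : ({(1, p), (p, 1)} : Set (G × G)) =
      {q : G × G | q.1 ∈ S ∧ q.2 ∈ S ∧ q.1 * q.2 = p} := by
    refine Set.eq_of_subset_of_ncard_le hsub ?_ hAfin
    rw [hcard]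
    exact le_of_eq h2
  have hmem : (d, t) ∈ {q : G × G | q.1 ∈ S ∧ q.2 ∈ S ∧ q.1 * q.2 = p} := ⟨hd, ht, hpt.symm⟩
  rw [← heq] at hmem
  rcases hmem with h | h
  · exact Or.inl (Prod.ext_iff.mp h).1
  · exact Or.inr (Prod.ext_iff.mp h).1

lemma gcd_exists (hS : IntegralMonoid S) {a b : G} (ha : a ∈ S) (hb : b ∈ S) :
    ∃ g ∈ S, SDvd S g a ∧ SDvd S g b ∧ ∀ d ∈ S, SDvd S d a → SDvd S d b → SDvd S d g := by
  classical
  set D := {d : G | d ∈ S ∧ SDvd S d a ∧ SDvd S d b} with hD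
  have hDfin : D.Finite := by
    apply Set.Finite.subset ((hS.ax3 a ha).image Prod.fst)
    rintro d ⟨hdS, ⟨s, hs, has⟩, -⟩
    exact ⟨(d, s), ⟨hdS, hs, has.symm⟩, rfl⟩
  have aux : ∀ F : Finset G, (∀ d ∈ F, d ∈ D) →
      ∃ g ∈ S, SDvd S g a ∧ SDvd S g b ∧ ∀ d ∈ F, SDvd S d g := by
    intro F
    induction F using Finset.induction_on with
    | empty =>
      intro _
      exact ⟨1, S.one_mem, ⟨a, ha, (one_mul a).symm⟩, ⟨b, hb, (one_mul b).symm⟩, by simp⟩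
    | @insert d F hdF ih =>
      intro hF
      obtain ⟨g, hg, hga, hgb, hgall⟩ := ih (fun x hx => hF x (Finset.mem_insert_of_mem hx))
      have hdD : d ∈ D := hF d (Finset.mem_insert_self d F)
      obtain ⟨l, hl, hset⟩ := lcm_exists hS hg hdD.1
      refine ⟨l, hl, dvd_of_lcm hset hga hdD.2.1, dvd_of_lcm hset hgb hdD.2.2, ?_⟩
      intro x hx
      rcases Finset.mem_insert.mp hx with rfl | hx'
      · exact lcm_dvd_right hset
      · exact sdvd_trans (hgall x hx') (lcm_dvd_left hset)
  obtain ⟨g, hg, hga, hgb, hgall⟩ := aux hDfin.toFinset (fun d hd => hDfin.mem_toFinset.mp hd)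
  refine ⟨g, hg, hga, hgb, ?_⟩
  intro d hdS hda hdb
  exact hgall d (hDfin.mem_toFinset.mpr ⟨hdS, hda, hdb⟩)

lemma leftSet_mul_mem {g u t : G} : g * t ∈ leftSet S (g * u) ↔ t ∈ leftSet S u := by
  constructor
  · rintro ⟨s, hs, h⟩
    rw [mul_assoc] at h
    exact ⟨s, hs, mul_left_cancel h⟩
  · rintro ⟨s, hs, rfl⟩
    exact ⟨s, hs, (mul_assoc g u s).symm⟩

/-- The modular-law instance: if `a ∣ c`, `e = lcm(a,b)`, `c ∣ e`, `g = gcd(c,b)`,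
`x = lcm(a,g)`, then `x = c`. Proved from homogeneity via the pentagon argument. -/
lemma modular_inst (hS : IntegralMonoid S) (hhom : Homogeneous S)
    {a b c e g x : G} (ha : a ∈ S) (hb : b ∈ S) (hc : c ∈ S) (hg : g ∈ S) (hx : x ∈ S)
    (hac : SDvd S a c)
    (hlab : leftSet S a ∩ leftSet S b = leftSet S e)
    (hce : SDvd S c e)
    (hgc : SDvd S g c) (hgb : SDvd S g b)
    (hguniv : ∀ d ∈ S, SDvd S d c → SDvd S d b → SDvd S d g)
    (hlx : leftSet S a ∩ leftSet S g = leftSet S x) :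
    x = c := by
  have hxc : SDvd S x c := dvd_of_lcm hlx hac hgc
  have hax : SDvd S a x := lcm_dvd_left hlx
  have hgx : SDvd S g x := lcm_dvd_right hlx
  have hae : SDvd S a e := lcm_dvd_left hlab
  have hbe : SDvd S b e := lcm_dvd_right hlab
  have hxe : SDvd S x e := sdvd_trans hxc hce
  -- lcm(b, x) = e
  obtain ⟨E1, hE1, hsetE1⟩ := lcm_exists hS hb hx
  have hE1e : E1 = e := by
    apply sdvd_antisymm hS
    · exact dvd_of_lcm hsetE1 hbe hxe
    · exact dvd_of_lcm hlab (sdvd_trans hax (lcm_dvd_right hsetE1)) (lcm_dvd_left hsetE1)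
  -- lcm(b, c) = e
  obtain ⟨E2, hE2, hsetE2⟩ := lcm_exists hS hb hc
  have hE2e : E2 = e := by
    apply sdvd_antisymm hS
    · exact dvd_of_lcm hsetE2 hbe hce
    · exact dvd_of_lcm hlab (sdvd_trans hac (lcm_dvd_right hsetE2)) (lcm_dvd_left hsetE2)
  rw [hE1e] at hsetE1
  rw [hE2e] at hsetE2
  -- translate by g
  obtain ⟨bb, hbb, hbeq⟩ := hgb
  obtain ⟨xx, hxx, hxeq⟩ := hgx
  obtain ⟨cc, hcc, hceq⟩ := hgc
  have key : ∀ d ∈ S, SDvd S (g * d) c → SDvd S (g * d) b → d = 1 := by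
    intro d hd h1 h2
    obtain ⟨t, ht, hgt⟩ := hguniv (g * d) (S.mul_mem hg hd) h1 h2
    rw [mul_assoc] at hgt
    have hdt : d * t = 1 := (left_eq_mul.mp hgt)
    exact (imul_eq_one hS hd ht hdt).1
  have lift : ∀ z zz : G, z = g * zz → ∀ d : G, SDvd S d zz → SDvd S (g * d) z := by
    rintro z zz rfl d ⟨t, ht, rfl⟩
    exact ⟨t, ht, (mul_assoc g d t).symm⟩
  have cop_x : ∀ d ∈ S, SDvd S d bb → SDvd S d xx → d = 1 := by
    intro d hd h1 h2
    exact key d hd (sdvd_trans (lift x xx hxeq d h2) hxc) (lift b bb hbeq d h1)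
  have cop_c : ∀ d ∈ S, SDvd S d bb → SDvd S d cc → d = 1 := by
    intro d hd h1 h2
    exact key d hd (lift c cc hceq d h2) (lift b bb hbeq d h1)
  have memb : ∀ t : G, (t ∈ leftSet S bb ↔ g * t ∈ leftSet S b) := by
    intro t; rw [hbeq]; exact leftSet_mul_mem.symm
  have memx : ∀ t : G, (t ∈ leftSet S xx ↔ g * t ∈ leftSet S x) := by
    intro t; rw [hxeq]; exact leftSet_mul_mem.symm
  have memc : ∀ t : G, (t ∈ leftSet S cc ↔ g * t ∈ leftSet S c) := by
    intro t; rw [hceq]; exact leftSet_mul_mem.symm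
  have hsetbar : leftSet S bb ∩ leftSet S xx = leftSet S bb ∩ leftSet S cc := by
    ext t
    constructor
    · rintro ⟨h1, h2⟩
      have : g * t ∈ leftSet S b ∩ leftSet S c := by
        rw [hsetE2, ← hsetE1]
        exact ⟨(memb t).mp h1, (memx t).mp h2⟩
      exact ⟨h1, (memc t).mpr this.2⟩
    · rintro ⟨h1, h2⟩
      have : g * t ∈ leftSet S b ∩ leftSet S x := by
        rw [hsetE1, ← hsetE2]
        exact ⟨(memb t).mp h1, (memc t).mp h2⟩
      exact ⟨h1, (memx t).mpr this.2⟩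
  have hxxcc : xx = cc := hhom bb xx cc hbb hxx hcc cop_x cop_c hsetbar
  rw [hxeq, hceq, hxxcc]

/-- Core lemma: an element `p ≠ 1` of `S` coprime to both `a` and `b`
cannot divide their least common multiple (unless trivially). -/
lemma mb_aux (hS : IntegralMonoid S) (hhom : Homogeneous S)
    {p : G} (hp : p ∈ S) (hp1 : p ≠ 1) :
    ∀ n : ℕ, ∀ a b e : G, a ∈ S → b ∈ S → e ∈ S →
      (∀ d ∈ S, SDvd S d p → SDvd S d a → d = 1) →
      (∀ d ∈ S, SDvd S d p → SDvd S d b → d = 1) →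
      leftSet S a ∩ leftSet S b = leftSet S e → SDvd S p e →
      tau S a + tau S b ≤ n → False := by
  intro n
  induction n with
  | zero =>
    intro a b e ha hb he copa copb hlab hpe hn
    have := tau_pos hS ha
    omega
  | succ n ih =>
    intro a b e ha hb he copa copb hlab hpe hn
    have hae : SDvd S a e := lcm_dvd_left hlab
    have hbe : SDvd S b e := lcm_dvd_right hlab
    obtain ⟨c, hcS, hlc⟩ := lcm_exists hS hp ha
    have hpc : SDvd S p c := lcm_dvd_left hlc
    have hac : SDvd S a c := lcm_dvd_right hlc
    have hce : SDvd S c e := dvd_of_lcm hlc hpe hae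
    obtain ⟨d0, hd0S, hld⟩ := lcm_exists hS hp hb
    have hpd : SDvd S p d0 := lcm_dvd_left hld
    have hbd : SDvd S b d0 := lcm_dvd_right hld
    have hde : SDvd S d0 e := dvd_of_lcm hld hpe hbe
    by_cases hc : c = e
    · by_cases hd : d0 = e
      · -- homogeneity forces a = b, then p ∣ a, contradiction
        have hsets : leftSet S p ∩ leftSet S a = leftSet S p ∩ leftSet S b := by
          rw [hlc, hld, hc, hd]
        have hab : a = b := hhom p a b hp ha hb copa copb hsets
        subst hab
        have : leftSet S a = leftSet S e := by rw [← hlab, Set.inter_self]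
        have hea : a = e := eq_of_leftSet_eq hS this
        subst hea
        exact hp1 (copa p hp (sdvd_refl S p) hpe)
      · -- shrink a: a' := gcd(d0, a)
        obtain ⟨a', ha'S, ha'd0, ha'a, ha'univ⟩ := gcd_exists hS hd0S ha
        obtain ⟨x', hx'S, hlx'⟩ := lcm_exists hS hb ha'S
        have hbd0 : SDvd S b d0 := hbd
        have hx'd0 : x' = d0 := by
          refine modular_inst hS hhom hb ha hd0S ha'S hx'S hbd0 ?_ hde ha'd0 ha'a ha'univ hlx'
          rw [Set.inter_comm]; exact hlab
        rw [hx'd0] at hlx'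
        have copa' : ∀ d ∈ S, SDvd S d p → SDvd S d a' → d = 1 := by
          intro d hdd h1 h2
          exact copa d hdd h1 (sdvd_trans h2 ha'a)
        have ha'ne : a' ≠ a := by
          rintro rfl
          apply hd
          exact sdvd_antisymm hS hde (dvd_of_lcm hlab ha'd0 hbd)
        have hlt : tau S a' < tau S a := tau_lt hS ha'S ha'a ha'ne
        refine ih a' b d0 ha'S hb hd0S copa' copb ?_ hpd (by omega)
        rw [Set.inter_comm]; exact hlx'
    · -- shrink b: b' := gcd(c, b)
      obtain ⟨b', hb'S, hb'c, hb'b, hb'univ⟩ := gcd_exists hS hcS hb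
      obtain ⟨x', hx'S, hlx'⟩ := lcm_exists hS ha hb'S
      have hx'c : x' = c := by
        exact modular_inst hS hhom ha hb hcS hb'S hx'S hac hlab hce hb'c hb'b hb'univ hlx'
      rw [hx'c] at hlx'
      have copb' : ∀ d ∈ S, SDvd S d p → SDvd S d b' → d = 1 := by
        intro d hdd h1 h2
        exact copb d hdd h1 (sdvd_trans h2 hb'b)
      have hb'ne : b' ≠ b := by
        rintro rfl
        apply hc
        exact sdvd_antisymm hS hce (dvd_of_lcm hlab hac hb'c)
      have hlt : tau S b' < tau S b := tau_lt hS hb'S hb'b hb'ne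
      exact ih a b' c ha hb'S hcS copa copb' hlx' hpc (by omega)

/-- Binary case: an irreducible dividing `lcm(a,b)` divides `a` or `b`. -/
lemma prime_lemma (hS : IntegralMonoid S) (hhom : Homogeneous S)
    {p a b e : G} (hp : p ∈ S) (h2 : tau S p = 2)
    (ha : a ∈ S) (hb : b ∈ S) (he : e ∈ S)
    (hlab : leftSet S a ∩ leftSet S b = leftSet S e) (hpe : SDvd S p e) :
    SDvd S p a ∨ SDvd S p b := by
  by_contra h
  push_neg at h
  have hp1 : p ≠ 1 := irred_ne_one hS h2
  have copa : ∀ d ∈ S, SDvd S d p → SDvd S d a → d = 1 := by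
    intro d hd hdp hda
    rcases irred_divisors hS hp h2 hd hdp with h1 | h1
    · exact h1
    · subst h1; exact absurd hda h.1
  have copb : ∀ d ∈ S, SDvd S d p → SDvd S d b → d = 1 := by
    intro d hd hdp hdb
    rcases irred_divisors hS hp h2 hd hdp with h1 | h1
    · exact h1
    · subst h1; exact absurd hdb h.2
  exact mb_aux hS hhom hp hp1 (tau S a + tau S b) a b e ha hb he copa copb hlab hpe le_rfl

lemma iInter_fin_split {α : Type*} (n : ℕ) (f : Fin (n + 1) → Set α) :
    (⋂ i, f i) = (⋂ i : Fin n, f i.castSucc) ∩ f (Fin.last n) := by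
  ext x
  simp only [Set.mem_iInter, Set.mem_inter_iff]
  constructor
  · intro h
    exact ⟨fun i => h _, h _⟩
  · rintro ⟨h1, h2⟩ i
    induction i using Fin.lastCases with
    | last => exact h2
    | cast j => exact h1 j

lemma lcm_fold (hS : IntegralMonoid S) :
    ∀ n : ℕ, ∀ v : Fin (n + 1) → G, (∀ i, v i ∈ S) →
      ∃ l ∈ S, (⋂ i, leftSet S (v i)) = leftSet S l := by
  intro n
  induction n with
  | zero =>
    intro v hv
    refine ⟨v 0, hv 0, ?_⟩
    ext x
    simp only [Set.mem_iInter]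
    exact ⟨fun h => h 0, fun h i => by rw [Fin.fin_one_eq_zero i]; exact h⟩
  | succ n ih =>
    intro v hv
    obtain ⟨l0, hl0, hset0⟩ := ih (fun i => v i.castSucc) (fun i => hv _)
    obtain ⟨l, hl, hset⟩ := lcm_exists hS hl0 (hv (Fin.last _))
    refine ⟨l, hl, ?_⟩
    rw [iInter_fin_split, hset0, hset]

lemma fin_lemma (hS : IntegralMonoid S) (hhom : Homogeneous S)
    {p : G} (hp : p ∈ S) (h2 : tau S p = 2) :
    ∀ n : ℕ, ∀ v : Fin (n + 1) → G, (∀ i, v i ∈ S) → ∀ m : G, m ∈ S →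
      (⋂ i, leftSet S (v i)) = leftSet S m → SDvd S p m → ∃ j, SDvd S p (v j) := by
  intro n
  induction n with
  | zero =>
    intro v hv m hm hset hpm
    have h0 : leftSet S (v 0) = leftSet S m := by
      rw [← hset]
      ext x
      simp only [Set.mem_iInter]
      exact ⟨fun h i => by rw [Fin.fin_one_eq_zero i]; exact h, fun h => h 0⟩
    have : v 0 = m := eq_of_leftSet_eq hS h0
    exact ⟨0, by rw [this]; exact hpm⟩
  | succ n ih =>
    intro v hv m hm hset hpm
    obtain ⟨l0, hl0, hset0⟩ := lcm_fold hS n (fun i => v i.castSucc) (fun i => hv _)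
    have hsplit : leftSet S l0 ∩ leftSet S (v (Fin.last (n + 1))) = leftSet S m := by
      rw [← hset0, ← hset]
      exact (iInter_fin_split (n + 1) (fun i => leftSet S (v i))).symm
    rcases prime_lemma hS hhom hp h2 hl0 (hv (Fin.last (n + 1))) hm hsplit hpm with h | h
    · obtain ⟨j, hj⟩ := ih (fun i => v i.castSucc) (fun i => hv _) l0 hl0 hset0 h
      exact ⟨j.castSucc, hj⟩
    · exact ⟨Fin.last (n + 1), h⟩

end Aux

theorem irreducible_dvd_lcm {G : Type*} [Group G] (S : Submonoid G)
    (hS : IntegralMonoid S) (hhom : Homogeneous S)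
    (k : ℕ) (hk : 2 ≤ k) (u : Fin k → G) (hu : ∀ i, u i ∈ S)
    (m : G) (hm : m ∈ S) (hlcm : (⋂ i, leftSet S (u i)) = leftSet S m)
    (p : G) (hp : p ∈ S) (hirr : tau S p = 2) (hpm : SDvd S p m) :
    ∃ j, SDvd S p (u j) := by
  obtain ⟨n, rfl⟩ : ∃ n, k = n + 1 := ⟨k - 1, by omega⟩
  exact fin_lemma hS hhom hp hirr n u hu m hm hlcm hpm
end
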